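/- arXiv:1904.04856 — 5 statements merged into one kernel-verified Lean document; each statement's English description precedes it below -/
import Mathlib

section
/- Let $Q$ be a P-groupoid that is left distributive, i.e., $x\cdot(y\cdot z) = (x\cdot y)\cdot(x\cdot z)$ for all $x,y,z$. Then left multiplication is injective: for all $x,a,b \in Q$, if $x\cdot a = x\cdot b$ then $a = b$. Hence $Q$ is a quasigroup. -/
theorem leftdist_pgroupoid_is_quasigroup
    (Q : Type*) [Fintype Q] (mul : Q → Q → Q)
    (P1 : ∀ x, mul x x = x)
    (P2 : ∀ x y, x ≠ y → mul x y ≠ x ∧ mul x y ≠ y)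
    (P3 : ∀ x y z, mul x y = z ↔ mul z y = x)
    (LD : ∀ x y z, mul x (mul y z) = mul (mul x y) (mul x z)) :
    (∀ x a b : Q, mul x a = mul x b → a = b) ∧
      (∀ x : Q, Function.Bijective (fun y => mul x y) ∧
        Function.Bijective (fun y => mul y x)) := by
  -- x·z = x implies z = x
  have fix : ∀ x z : Q, mul x z = x → z = x := by
    intro x z h
    by_contra hne
    exact (P2 x z (Ne.symm hne)).1 h
  -- Claim A : if x·t = x·(x·u) then t = x·u
  have claimA : ∀ x t u : Q, mul x t = mul x (mul x u) → t = mul x u := by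
    intro x t u h
    have e1 : mul (mul x u) u = x := (P3 x u (mul x u)).mp rfl
    have e2 : mul x (mul t u) = x := by
      calc mul x (mul t u) = mul (mul x t) (mul x u) := LD x t u
        _ = mul (mul x (mul x u)) (mul x u) := by rw [h]
        _ = mul x (mul (mul x u) u) := (LD x (mul x u) u).symm
        _ = mul x x := by rw [e1]
        _ = x := P1 x
    have e3 : mul t u = x := fix x _ e2
    exact ((P3 t u x).mp e3).symm
  -- left multiplication is injective
  have inj : ∀ x a b : Q, mul x a = mul x b → a = b := by
    intro x a b h
    set g : Q → Q := fun y => mul x y with hg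
    -- g restricted to its range is injective, hence surjective
    have Finj : Function.Injective
        (fun m : Set.range g => (⟨g m.1, ⟨m.1, rfl⟩⟩ : Set.range g)) := by
      rintro ⟨m, u, hu⟩ ⟨m', u', hu'⟩ hmm
      have h1 : g m = g m' := congrArg Subtype.val hmm
      have h2 : m = g u' := claimA x m u' (by show g m = g (g u'); rw [h1, hu'])
      have h3 : m' = g u' := claimA x m' u' (by show g m' = g (g u'); rw [hu'])
      simp [h2, h3]
    have Fsurj : Function.Surjective
        (fun m : Set.range g => (⟨g m.1, ⟨m.1, rfl⟩⟩ : Set.range g)) :=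
      Finite.surjective_of_injective Finj
    obtain ⟨⟨m, u, hu⟩, hm⟩ := Fsurj ⟨g a, ⟨a, rfl⟩⟩
    have hgm : g m = g a := congrArg Subtype.val hm
    have ha : a = g u := claimA x a u (by show g a = g (g u); rw [hu, hgm])
    have hb : b = g u := by
      apply claimA x b u
      show g b = g (g u)
      rw [hu, hgm]
      exact h.symm
    rw [ha, hb]
  refine ⟨inj, fun x => ⟨?_, ?_⟩⟩
  · exact Finite.injective_iff_bijective.mp (fun a b => inj x a b)
  · have hinv : Function.Involutive (fun y => mul y x) := by
      intro y
      exact (P3 y x (mul y x)).mp rfl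
    exact hinv.bijective
end

section
/- Let $Q$ be a left distributive P-groupoid. Then for all $x,y,z \in Q$: $x\cdot((x\cdot y)\cdot z) = (x\cdot y)\cdot(y\cdot z)$. -/
theorem leftdist_pgroupoid_identity_e30
    (Q : Type*) (mul : Q → Q → Q)
    (P1 : ∀ x, mul x x = x)
    (P2 : ∀ x y, x ≠ y → mul x y ≠ x ∧ mul x y ≠ y)
    (P3 : ∀ x y z, mul x y = z ↔ mul z y = x)
    (LD : ∀ x y z, mul x (mul y z) = mul (mul x y) (mul x z)) :
    ∀ x y z : Q, mul x (mul (mul x y) z) = mul (mul x y) (mul y z) := by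
  intro x y z
  have h : mul (mul x y) y = x := (P3 x y (mul x y)).mp rfl
  calc mul x (mul (mul x y) z) = mul (mul (mul x y) y) (mul (mul x y) z) := by rw [h]
    _ = mul (mul x y) (mul y z) := (LD (mul x y) y z).symm
end

section
/- Let $Q$ be a left distributive P-groupoid. Then for all $x,y,z \in Q$: $((x\cdot y)\cdot z)\cdot x = (x\cdot y)\cdot(z\cdot y)$. -/
theorem leftdist_pgroupoid_identity_e31
    (Q : Type*) (mul : Q → Q → Q)
    (P1 : ∀ x, mul x x = x)
    (P2 : ∀ x y, x ≠ y → mul x y ≠ x ∧ mul x y ≠ y)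
    (P3 : ∀ x y z, mul x y = z ↔ mul z y = x)
    (LD : ∀ x y z, mul x (mul y z) = mul (mul x y) (mul x z)) :
    ∀ x y z : Q, mul (mul (mul x y) z) x = mul (mul x y) (mul z y) := by
  intro x y z
  have cancel : ∀ a b, mul (mul a b) b = a := fun a b => (P3 a b (mul a b)).mp rfl
  have h : mul (mul x y) z = mul (mul (mul x y) (mul z y)) x := by
    conv_lhs => rw [← cancel z y]
    rw [LD, cancel x y]
  exact (P3 _ _ _).mp h.symm
end

section
/- Let $n$ be an odd positive integer and define $r \circ s = 2s - r$ on $\mathbb{Z}/n\mathbb{Z}$. If $H \subseteq \mathbb{Z}/n\mathbb{Z}$ is nonempty and closed under $\circ$ (a subgroupoid), then $|H|$ divides $n$. -/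
theorem denes_keedwell_subgroupoid_card_dvd (n : ℕ) (hodd : Odd n) (hpos : 0 < n)
    (H : Finset (ZMod n)) (hne : H.Nonempty)
    (hclosed : ∀ a ∈ H, ∀ b ∈ H, (2 * b - a : ZMod n) ∈ H) :
    H.card ∣ n := by
  obtain ⟨a, ha⟩ := hne
  set T : Finset (ZMod n) := H.image (· - a) with hTdef
  have memT : ∀ x : ZMod n, x ∈ T ↔ x + a ∈ H := by
    intro x
    constructor
    · rintro hx
      obtain ⟨h, hh, rfl⟩ := Finset.mem_image.mp hx
      simpa using hh
    · intro hx
      exact Finset.mem_image.mpr ⟨x + a, hx, by ring⟩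
  have hT : ∀ x ∈ T, ∀ y ∈ T, (2 * y - x : ZMod n) ∈ T := by
    intro x hx y hy
    rw [memT] at hx hy ⊢
    have := hclosed _ hx _ hy
    have heq : (2 * (y + a) - (x + a) : ZMod n) = 2 * y - x + a := by ring
    rwa [heq] at this
  have h0 : (0 : ZMod n) ∈ T := (memT 0).mpr (by simpa using ha)
  have hneg : ∀ x ∈ T, (-x : ZMod n) ∈ T := by
    intro x hx
    have := hT x hx 0 h0
    simpa using this
  have hdouble : ∀ y ∈ T, (2 * y : ZMod n) ∈ T := by
    intro y hy
    have := hT 0 h0 y hy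
    simpa using this
  have hu : IsUnit (2 : ZMod n) := by
    have hcop : Nat.Coprime 2 n := Nat.coprime_two_left.mpr hodd
    have := (ZMod.isUnit_iff_coprime 2 n).mpr hcop
    simpa using this
  have hinj : Function.Injective (fun x : ZMod n => 2 * x) := hu.mul_right_injective
  have himg : T.image (fun x => 2 * x) = T := by
    apply Finset.eq_of_subset_of_card_le
    · intro x hx
      obtain ⟨y, hy, rfl⟩ := Finset.mem_image.mp hx
      exact hdouble y hy
    · rw [Finset.card_image_of_injective _ hinj]
  have hhalf : ∀ x ∈ T, ∃ y ∈ T, (2 * y : ZMod n) = x := by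
    intro x hx
    rw [← himg] at hx
    obtain ⟨y, hy, h⟩ := Finset.mem_image.mp hx
    exact ⟨y, hy, h⟩
  have hadd : ∀ x ∈ T, ∀ y ∈ T, (x + y : ZMod n) ∈ T := by
    intro x hx y hy
    obtain ⟨x', hx', rfl⟩ := hhalf x hx
    have := hT (-y) (hneg y hy) x' hx'
    have heq : (2 * x' - -y : ZMod n) = 2 * x' + y := by ring
    rwa [heq] at this
  let K : AddSubgroup (ZMod n) :=
    { carrier := T
      add_mem' := fun hx hy => hadd _ hx _ hy
      zero_mem' := h0
      neg_mem' := fun hx => hneg _ hx }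
  have hcard : H.card = Nat.card K := by
    have h1 : H.card = T.card := (Finset.card_image_of_injective _ (sub_left_injective)).symm
    rw [h1]
    have : Nat.card K = Nat.card (T : Set (ZMod n)) := rfl
    rw [this, Nat.card_coe_set_eq, Set.ncard_coe_finset]
  have := AddSubgroup.card_addSubgroup_dvd_card K
  rw [Nat.card_zmod] at this
  rwa [hcard]
end

section
/- Let $Q$ be a finite P-groupoid whose associated cycle decomposition of the complete graph $K_{|Q|}$ is a Hamiltonian decomposition; algebraically, assume that for every $x \neq y$ in $Q$, the sequence defined by $a_0 = x$, $a_1 = y$, $a_{k+1} = a_{k-1} \cdot a_k$ visits all elements of $Q$. Then $Q$ has no subgroupoid $H$ with $1 < |H| < |Q|$. -/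
theorem hamiltonian_pgroupoid_no_proper_subgroupoid
    (Q : Type*) [Fintype Q] (mul : Q → Q → Q)
    (P1 : ∀ x, mul x x = x)
    (P2 : ∀ x y, x ≠ y → mul x y ≠ x ∧ mul x y ≠ y)
    (P3 : ∀ x y z, mul x y = z ↔ mul z y = x)
    (hHam : ∀ x y : Q, x ≠ y → ∀ f : ℕ → Q, f 0 = x → f 1 = y →
      (∀ k, f (k + 2) = mul (f k) (f (k + 1))) → ∀ q : Q, ∃ k, f k = q) :
    ¬ ∃ H : Finset Q, (∀ a ∈ H, ∀ b ∈ H, mul a b ∈ H) ∧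
      1 < H.card ∧ H.card < Fintype.card Q := by
  rintro ⟨H, hclosed, hgt, hlt⟩
  obtain ⟨x, hx, y, hy, hxy⟩ := Finset.one_lt_card.mp hgt
  -- there's an element outside H
  obtain ⟨q, hq⟩ : ∃ q : Q, q ∉ H := by
    by_contra h
    push_neg at h
    have : Fintype.card Q ≤ H.card := by
      have := Finset.card_le_card (fun a _ => h a : Finset.univ ⊆ H)
      simpa using this
    omega
  -- define the sequence
  let g : ℕ → Q × Q := fun n => Nat.rec (x, y) (fun _ p => (p.2, mul p.1 p.2)) n
  let f : ℕ → Q := fun n => (g n).1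
  have hrec : ∀ k, f (k + 2) = mul (f k) (f (k + 1)) := by
    intro k
    show (g (k+2)).1 = mul (g k).1 (g (k+1)).1
    have h1 : (g (k+1)).1 = (g k).2 := rfl
    have h2 : (g (k+2)).1 = mul (g k).1 (g k).2 := rfl
    rw [h2, h1]
  have hmem : ∀ k, f k ∈ H ∧ (g k).2 ∈ H := by
    intro k
    induction k with
    | zero => exact ⟨hx, hy⟩
    | succ n ih => exact ⟨ih.2, hclosed _ ih.1 _ ih.2⟩
  obtain ⟨k, hk⟩ := hHam x y hxy f rfl rfl hrec q
  exact hq (hk ▸ (hmem k).1)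
end
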